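/- If the total mass is M = 1 and q is a normalized central configuration with n ≥ 2 bodies, then there exists a pair i ≠ j with r_{ij} ≥ 1. -/

import Mathlib

/-!
The pair forces cancel in total, so the centre of mass lies at the origin and, with total
mass one, the equation for body `i` reads `∑ⱼ mⱼ (qᵢ - qⱼ) = qᵢ = ∑_{j ≠ i} (mⱼ / rᵢⱼ³) (qᵢ - qⱼ)`.
Pair both sides with `qᵢ` for a body `i` of maximal norm: every product `⟪qᵢ, qᵢ - qⱼ⟫` with
`j ≠ i` is then at least `rᵢⱼ² / 2 > 0`, so if all `rᵢⱼ < 1` the coefficients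
`mⱼ / rᵢⱼ³ > mⱼ` would make the right-hand side strictly larger.
-/

open Finset RealInnerProductSpace

variable {ι E : Type*} [Fintype ι] [NormedAddCommGroup E] [InnerProductSpace ℝ E]

def IsNormalizedCentralConfig [DecidableEq ι] (m : ι → ℝ) (q : ι → E) : Prop :=
  ∀ i, q i = ∑ j ∈ univ \ {i}, (m j / ‖q i - q j‖ ^ 3) • (q i - q j)

theorem sum_sum_smul_sub_eq_zero_of_symm {w : ι → ι → ℝ} (hw : ∀ i j, w i j = w j i)
    (q : ι → E) : ∑ i, ∑ j, w i j • (q i - q j) = 0 := by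
  simp only [smul_sub, sum_sub_distrib, sub_eq_zero]
  rw [sum_comm]
  simp only [hw]

theorem real_inner_sub_pos_of_norm_le {x y : E} (hxy : x ≠ y) (hnorm : ‖y‖ ≤ ‖x‖) :
    0 < ⟪x, x - y⟫ := by
  have hdist : 0 < ‖x - y‖ ^ 2 := by
    have := norm_pos_iff.2 (sub_ne_zero.2 hxy)
    positivity
  have hsq : ‖y‖ ^ 2 ≤ ‖x‖ ^ 2 := pow_le_pow_left₀ (norm_nonneg y) hnorm 2
  rw [norm_sub_sq_real] at hdist
  rw [inner_sub_right, real_inner_self_eq_norm_sq]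
  linarith

namespace IsNormalizedCentralConfig

variable [DecidableEq ι] {m : ι → ℝ} {q : ι → E}

theorem sum_smul_eq_zero (hcc : IsNormalizedCentralConfig m q) : ∑ i, m i • q i = 0 := by
  have hpair : ∀ i, m i • q i = ∑ j, (m i * (m j / ‖q i - q j‖ ^ 3)) • (q i - q j) := by
    intro i
    conv_lhs => rw [hcc i]
    rw [smul_sum, sdiff_singleton_eq_erase, sum_erase _ (by simp)]
    simp only [smul_smul]
  simp_rw [hpair]
  refine sum_sum_smul_sub_eq_zero_of_symm (fun i j => ?_) q
  rw [norm_sub_rev, mul_div_left_comm]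

theorem exists_one_le_norm_sub_of_norm_le [Nontrivial ι] (hm : ∀ i, 0 < m i) (hM : ∑ i, m i = 1)
    (hq : Function.Injective q) (hcc : IsNormalizedCentralConfig m q) {i : ι}
    (hi : ∀ j, ‖q j‖ ≤ ‖q i‖) : ∃ j ≠ i, 1 ≤ ‖q i - q j‖ := by
  by_contra! hlt
  obtain ⟨j₀, hj₀⟩ := exists_ne i
  set t : ι → ℝ := fun j => ⟪q i, q i - q j⟫
  have ht : ∀ j ∈ univ.erase i, 0 < t j := fun j hj =>
    real_inner_sub_pos_of_norm_le (hq.ne (ne_of_mem_erase hj).symm) (hi j)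
  have hmass : ∑ j ∈ univ.erase i, m j * t j = ‖q i‖ ^ 2 := by
    rw [sum_erase _ (by simp [t])]
    simp only [t, inner_sub_right, real_inner_self_eq_norm_sq, mul_sub, sum_sub_distrib,
      ← sum_mul, hM, ← real_inner_smul_right, ← inner_sum, hcc.sum_smul_eq_zero,
      inner_zero_right]
    ring
  have hforce : ∑ j ∈ univ.erase i, m j / ‖q i - q j‖ ^ 3 * t j = ‖q i‖ ^ 2 := by
    have h := congrArg (⟪q i, ·⟫) (hcc i)
    simp only [real_inner_self_eq_norm_sq, sdiff_singleton_eq_erase, inner_sum,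
      real_inner_smul_right] at h
    exact h.symm
  have hcoeff : ∀ j ∈ univ.erase i, m j < m j / ‖q i - q j‖ ^ 3 := by
    intro j hj
    have hr : 0 < ‖q i - q j‖ :=
      norm_pos_iff.2 (sub_ne_zero.2 (hq.ne (ne_of_mem_erase hj).symm))
    rw [lt_div_iff₀ (by positivity)]
    exact mul_lt_of_lt_one_right (hm j)
      (pow_lt_one₀ hr.le (hlt j (ne_of_mem_erase hj)) (by norm_num))
  have : ∑ j ∈ univ.erase i, m j * t j < ∑ j ∈ univ.erase i, m j / ‖q i - q j‖ ^ 3 * t j :=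
    sum_lt_sum_of_nonempty ⟨j₀, mem_erase.2 ⟨hj₀, mem_univ _⟩⟩
      fun j hj => mul_lt_mul_of_pos_right (hcoeff j hj) (ht j hj)
  linarith

end IsNormalizedCentralConfig

theorem centralConfig_exists_distance_ge_one
    (n d : ℕ) (hn : 2 ≤ n)
    (q : Fin n → EuclideanSpace ℝ (Fin d)) (m : Fin n → ℝ)
    (hm : ∀ i, 0 < m i)
    (hM : ∑ i, m i = 1)
    (hq : ∀ i j, i ≠ j → q i ≠ q j)
    (hcc : ∀ i, q i = ∑ j ∈ Finset.univ \ {i},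
      (m j / ‖q i - q j‖ ^ 3) • (q i - q j)) :
    ∃ i j : Fin n, i ≠ j ∧ 1 ≤ ‖q i - q j‖ := by
  have : Nontrivial (Fin n) := Fin.nontrivial_iff_two_le.2 hn
  obtain ⟨i, hi⟩ := Finite.exists_max fun i => ‖q i‖
  have hinj : Function.Injective q := fun a b hab => by_contra fun hne => hq a b hne hab
  obtain ⟨j, hji, hj⟩ :=
    IsNormalizedCentralConfig.exists_one_le_norm_sub_of_norm_le hm hM hinj hcc hi
  exact ⟨i, j, hji.symm, hj⟩
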